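/- arXiv:1609.05189 — 2 statements merged into one kernel-verified Lean document; each statement's English description precedes it below -/
import Mathlib

section
/- Let Π_ℓ = [0,ℓ_1] × ... × [0,ℓ_n] with each ℓ_i ≥ 1, let A_ℓ = Π_ℓ ∩ Z^n be its lattice points, and set k_ℓ = ℓ_1 + ... + ℓ_n − 1. Then any polynomial of degree at most k_ℓ that vanishes at all points of A_ℓ except possibly one point p in fact vanishes at p as well. -/
open MvPolynomial

lemma altsum_choose_pow (d : ℕ) : ∀ ℓ : ℕ, d < ℓ →
    ∑ b ∈ Finset.range (ℓ + 1), (-1 : ℚ) ^ b * (ℓ.choose b) * (b : ℚ) ^ d = 0 := by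
  induction d using Nat.strong_induction_on with
  | _ d IH =>
    intro ℓ hd
    match d with
    | 0 =>
      simp only [pow_zero, mul_one]
      have h := Int.alternating_sum_range_choose_of_ne (by omega : ℓ ≠ 0)
      have h2 := congrArg (fun z : ℤ => (z : ℚ)) h
      push_cast at h2
      simpa using h2
    | (e + 1) =>
      obtain ⟨m, rfl⟩ : ∃ m, ℓ = m + 1 := ⟨ℓ - 1, by omega⟩
      have hem : e < m := by omega
      rw [Finset.sum_range_succ']
      simp only [Nat.cast_zero, zero_pow (Nat.succ_ne_zero e), mul_zero, add_zero]
      push_cast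
      have hc : ∀ c : ℕ, (((m + 1).choose (c + 1) : ℚ)) * ((c : ℚ) + 1)
          = ((m : ℚ) + 1) * (m.choose c) := by
        intro c
        have h := Nat.add_one_mul_choose_eq m c
        exact_mod_cast (congrArg (fun z : ℕ => (z : ℚ)) h).symm
      have step : ∀ c : ℕ,
          (-1 : ℚ) ^ (c + 1) * ((m + 1).choose (c + 1)) * ((c : ℚ) + 1) ^ (e + 1)
          = (-((m : ℚ) + 1)) * ((-1 : ℚ) ^ c * (m.choose c) * ((c : ℚ) + 1) ^ e) := by
        intro c
        have : ((c : ℚ) + 1) ^ (e + 1) = ((c : ℚ) + 1) ^ e * ((c : ℚ) + 1) := by ring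
        rw [this, pow_succ]
        calc (-1 : ℚ) ^ c * -1 * ((m + 1).choose (c + 1)) * (((c : ℚ) + 1) ^ e * ((c : ℚ) + 1))
            = (-1 : ℚ) ^ c * -1 * (((m + 1).choose (c + 1) : ℚ) * ((c : ℚ) + 1))
              * ((c : ℚ) + 1) ^ e := by ring
          _ = _ := by rw [hc c]; ring
      calc ∑ c ∈ Finset.range (m + 1),
              (-1 : ℚ) ^ (c + 1) * ((m + 1).choose (c + 1)) * ((c : ℚ) + 1) ^ (e + 1)
          = (-((m : ℚ) + 1)) * ∑ c ∈ Finset.range (m + 1),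
              (-1 : ℚ) ^ c * (m.choose c) * ((c : ℚ) + 1) ^ e := by
            rw [Finset.mul_sum]
            exact Finset.sum_congr rfl fun c _ => by
              have := step c; push_cast at this ⊢; linarith [this]
        _ = 0 := by
            have expand : ∀ c : ℕ, ((c : ℚ) + 1) ^ e
                = ∑ j ∈ Finset.range (e + 1), (c : ℚ) ^ j * (e.choose j) := by
              intro c
              rw [add_pow]
              exact Finset.sum_congr rfl fun j _ => by rw [one_pow]; ring
            have : ∑ c ∈ Finset.range (m + 1),
                (-1 : ℚ) ^ c * (m.choose c) * ((c : ℚ) + 1) ^ e = 0 := by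
              simp only [expand, Finset.mul_sum]
              rw [Finset.sum_comm]
              refine Finset.sum_eq_zero fun j hj => ?_
              have hjm : j < m := lt_of_lt_of_le (Finset.mem_range.mp hj)
                (by omega : e + 1 ≤ m)
              have := IH j (by { have := Finset.mem_range.mp hj; omega }) m hjm
              calc ∑ c ∈ Finset.range (m + 1),
                    (-1 : ℚ) ^ c * (m.choose c) * ((c : ℚ) ^ j * (e.choose j))
                  = (e.choose j : ℚ) * ∑ c ∈ Finset.range (m + 1),
                    (-1 : ℚ) ^ c * (m.choose c) * (c : ℚ) ^ j := by
                      rw [Finset.mul_sum]; exact Finset.sum_congr rfl fun c _ => by ring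
                _ = 0 := by rw [this, mul_zero]
            rw [this, mul_zero]

/-- Cayley–Bacharach for boxes: with `A_ℓ` the lattice points of
`Π_ℓ = [0,ℓ_1] × ⋯ × [0,ℓ_n]` (each `ℓ_i ≥ 1`) and `k_ℓ = ∑ ℓ_i - 1`, any polynomial of
degree at most `k_ℓ` vanishing at all points of `A_ℓ` except possibly one point `p`
vanishes at `p` as well. -/
theorem stmt10 (n : ℕ) (hn : 1 ≤ n) (ℓ : Fin n → ℕ) (hℓ : ∀ i, 1 ≤ ℓ i)
    (Q : MvPolynomial (Fin n) ℚ) (hQ : Q.totalDegree ≤ (∑ i, ℓ i) - 1)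
    (p : Fin n → ℕ) (hp : ∀ i, p i ≤ ℓ i)
    (hvan : ∀ β : Fin n → ℕ, (∀ i, β i ≤ ℓ i) → β ≠ p →
      eval (fun i => (β i : ℚ)) Q = 0) :
    eval (fun i => (p i : ℚ)) Q = 0 := by
  classical
  set S : Finset (Fin n → ℕ) := Fintype.piFinset fun i => Finset.range (ℓ i + 1) with hS
  set c : (Fin n → ℕ) → ℚ :=
    fun β => ∏ i, ((-1 : ℚ) ^ (β i) * ((ℓ i).choose (β i))) with hc
  have hmem : ∀ β : Fin n → ℕ, β ∈ S ↔ ∀ i, β i ≤ ℓ i := by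
    intro β
    simp [hS, Fintype.mem_piFinset, Nat.lt_succ_iff]
  have hsumℓ : 1 ≤ ∑ i, ℓ i := by
    have i0 : Fin n := ⟨0, hn⟩
    calc 1 ≤ ℓ i0 := hℓ i0
      _ ≤ ∑ i, ℓ i := Finset.single_le_sum (fun i _ => Nat.zero_le _) (Finset.mem_univ i0)
  -- key vanishing identity
  have key : ∑ β ∈ S, c β * eval (fun i => (β i : ℚ)) Q = 0 := by
    have : ∀ β ∈ S, c β * eval (fun i => (β i : ℚ)) Q
        = ∑ d ∈ Q.support, coeff d Q * ∏ i,
            ((-1 : ℚ) ^ (β i) * ((ℓ i).choose (β i)) * ((β i : ℚ)) ^ (d i)) := by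
      intro β _
      rw [eval_eq', Finset.mul_sum]
      refine Finset.sum_congr rfl fun d _ => ?_
      calc c β * (coeff d Q * ∏ i, ((β i : ℚ)) ^ d i)
          = coeff d Q * ((∏ i, ((-1 : ℚ) ^ (β i) * ((ℓ i).choose (β i))))
              * ∏ i, ((β i : ℚ)) ^ d i) := by rw [hc]; ring
        _ = _ := by rw [← Finset.prod_mul_distrib]
    rw [Finset.sum_congr rfl this, Finset.sum_comm]
    refine Finset.sum_eq_zero fun d hd => ?_
    have hdeg : ∑ i, d i < ∑ i, ℓ i := by
      have h1 : (d.sum fun _ e => e) ≤ Q.totalDegree := le_totalDegree hd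
      have h2 : (d.sum fun _ e => e) = ∑ i, d i :=
        Finsupp.sum_fintype _ _ (fun _ => rfl)
      omega
    obtain ⟨i0, hi0⟩ : ∃ i, d i < ℓ i := by
      by_contra h
      push_neg at h
      exact absurd (Finset.sum_le_sum fun i _ => h i) (not_le.mpr hdeg)
    rw [← Finset.mul_sum, hS]
    have hps := Finset.prod_univ_sum (fun i => Finset.range (ℓ i + 1))
      (fun i b => (-1 : ℚ) ^ b * ((ℓ i).choose b) * (b : ℚ) ^ (d i))
    rw [← hps]
    have : ∑ b ∈ Finset.range (ℓ i0 + 1),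
        (-1 : ℚ) ^ b * ((ℓ i0).choose b) * (b : ℚ) ^ (d i0) = 0 :=
      altsum_choose_pow (d i0) (ℓ i0) hi0
    rw [Finset.prod_eq_zero (Finset.mem_univ i0) this, mul_zero]
  -- reduce the sum to the single term at p
  have hpS : p ∈ S := (hmem p).mpr hp
  have hsingle : ∑ β ∈ S, c β * eval (fun i => (β i : ℚ)) Q
      = c p * eval (fun i => (p i : ℚ)) Q := by
    refine Finset.sum_eq_single p (fun β hβ hne => ?_) (fun h => absurd hpS h)
    rw [hvan β ((hmem β).mp hβ) hne, mul_zero]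
  have hcp : c p ≠ 0 := by
    rw [hc]
    refine Finset.prod_ne_zero_iff.mpr fun i _ => mul_ne_zero ?_ ?_
    · exact pow_ne_zero _ (by norm_num)
    · exact_mod_cast (Nat.choose_pos (hp i)).ne'
  have := hsingle ▸ key
  exact (mul_eq_zero.mp this).resolve_left hcp
end

section
/- If c_k ≥ 2, i.e., the kernel of A^(k) has dimension at least 2, and X_A is k-selfdual, then there exist two nonzero 0-1 vectors with disjoint supports in the row span of A; consequently, for k ≥ 2 the rank of A^(k) is strictly less than binom(n+k,k) (X_A is not generically k-jet spanned). -/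
open Matrix
open scoped Classical

/-!
Let `W` be the kernel of `A^(k)`. Two coordinates are called proportional if they are
proportional on every vector of `W`; as `W` contains a nowhere-vanishing vector this is an
equivalence relation, and as `dim W ≥ 2` not every coordinate is proportional to a fixed one.
The indicator vectors of two distinct classes are the required `0-1` vectors.

Because the first row of `A` is all ones, every vector of the row span of `A` is the evaluation
of an affine polynomial at the columns `b_j` of `A`. The product of the affine polynomials of the
two indicator vectors is a nonzero polynomial of degree `≤ 2 ≤ k` vanishing at every `b_j`, and
its coefficients are a nonzero linear relation among the `binom(n+k,k)` rows of `A^(k)`, which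
are the monomials of degree `≤ k` evaluated at the `b_j`.
-/

open MvPolynomial Module

section CoordProportional

variable {K ι : Type*} [Field K]

def CoordProportional (W : Submodule K (ι → K)) (i j : ι) : Prop :=
  ∃ t : K, ∀ w ∈ W, w i = t * w j

variable {W : Submodule K (ι → K)}

theorem coordProportional_refl (W : Submodule K (ι → K)) (i : ι) : CoordProportional W i i :=
  ⟨1, fun _ _ => (one_mul _).symm⟩

theorem CoordProportional.trans {i j l : ι} (hij : CoordProportional W i j)
    (hjl : CoordProportional W j l) : CoordProportional W i l := by
  obtain ⟨s, hs⟩ := hij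
  obtain ⟨t, ht⟩ := hjl
  exact ⟨s * t, fun w hw => by rw [hs w hw, ht w hw, mul_assoc]⟩

theorem CoordProportional.symm {v : ι → K} (hv : v ∈ W) (hv0 : ∀ i, v i ≠ 0) {i j : ι}
    (h : CoordProportional W i j) : CoordProportional W j i := by
  obtain ⟨t, ht⟩ := h
  have ht0 : t ≠ 0 := by
    rintro rfl
    exact hv0 i (by simpa using ht v hv)
  exact ⟨t⁻¹, fun w hw => by rw [ht w hw, inv_mul_cancel_left₀ ht0]⟩

theorem coordProportional_equivalence {v : ι → K} (hv : v ∈ W) (hv0 : ∀ i, v i ≠ 0) :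
    Equivalence (CoordProportional W) :=
  ⟨coordProportional_refl W, CoordProportional.symm hv hv0, CoordProportional.trans⟩

theorem coordProportional_iff_exists_or {v : ι → K} (hv : v ∈ W) (hv0 : ∀ i, v i ≠ 0)
    {i j : ι} : CoordProportional W i j ↔
      ∃ t : K, (∀ w ∈ W, w i = t * w j) ∨ (∀ w ∈ W, w j = t * w i) := by
  constructor
  · rintro ⟨t, ht⟩
    exact ⟨t, .inl ht⟩
  · rintro ⟨t, ht | ht⟩
    · exact ⟨t, ht⟩
    · exact CoordProportional.symm hv hv0 ⟨t, ht⟩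

theorem finrank_le_one_of_forall_coordProportional {i₀ : ι}
    (h : ∀ i, CoordProportional W i i₀) : finrank K W ≤ 1 := by
  have hinj : Function.Injective ((LinearMap.proj i₀ : (ι → K) →ₗ[K] K) ∘ₗ W.subtype) := by
    intro w w' hww'
    ext i
    obtain ⟨t, ht⟩ := h i
    rw [ht w w.2, ht w' w'.2]
    exact congrArg (t * ·) hww'
  simpa using LinearMap.finrank_le_finrank_of_injective hinj

end CoordProportional

section ClassIndicator

variable {ι M : Type*} [Zero M] [One M]

noncomputable def classIndicator (R : ι → ι → Prop) (i₀ : ι) : ι → M :=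
  fun i => if R i i₀ then 1 else 0

theorem classIndicator_eq_zero_or_one (R : ι → ι → Prop) (i₀ j : ι) :
    classIndicator (M := M) R i₀ j = 0 ∨ classIndicator (M := M) R i₀ j = 1 := by
  unfold classIndicator
  split_ifs
  exacts [.inr rfl, .inl rfl]

theorem classIndicator_ne_zero [NeZero (1 : M)] {R : ι → ι → Prop} (hR : ∀ i, R i i) (i₀ : ι) :
    classIndicator (M := M) R i₀ ≠ 0 := fun h =>
  one_ne_zero (α := M) (by simpa [classIndicator, hR i₀] using congrFun h i₀)

theorem classIndicator_eq_zero_or_eq_zero {R : ι → ι → Prop} (hR : Equivalence R) {i₀ i₁ : ι}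
    (h : ¬ R i₁ i₀) (j : ι) :
    classIndicator (M := M) R i₀ j = 0 ∨ classIndicator (M := M) R i₁ j = 0 := by
  by_cases hj : R j i₀
  · exact .inr (if_neg fun hj' => h (hR.trans (hR.symm hj') hj))
  · exact .inl (if_neg hj)

end ClassIndicator

theorem Matrix.rank_lt_card_height_of_vecMul_eq_zero {m n K : Type*} [Fintype m] [Fintype n]
    [Field K] {M : Matrix m n K} {c : m → K} (hc : c ≠ 0) (h : c ᵥ* M = 0) :
    M.rank < Fintype.card m := by
  rw [← rank_transpose, Matrix.rank]
  have hker : LinearMap.ker Mᵀ.mulVecLin ≠ ⊥ :=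
    (Submodule.ne_bot_iff _).mpr ⟨c, by simp [h], hc⟩
  have hrank := LinearMap.finrank_range_add_finrank_ker Mᵀ.mulVecLin
  rw [finrank_fintype_fun_eq_card] at hrank
  have := Submodule.finrank_eq_zero.not.mpr hker
  omega

section Monomials

variable {σ ι K : Type*} [Field K]

noncomputable def evalAtPoints (p : ι → σ → K) : MvPolynomial σ K →ₐ[K] (ι → K) :=
  AlgHom.pi fun j => aeval (p j)

@[simp]
theorem evalAtPoints_apply (p : ι → σ → K) (q : MvPolynomial σ K) (j : ι) :
    evalAtPoints p q j = eval (p j) q := by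
  simp [evalAtPoints]

theorem span_rows_le_map_evalAtPoints {n : ℕ} (A : Matrix (Fin (n + 1)) ι K)
    (hA : ∀ j, A 0 j = 1) :
    Submodule.span K (Set.range A) ≤
      (restrictTotalDegree (Fin n) K 1).map (evalAtPoints fun j i => A i.succ j).toLinearMap := by
  rw [Submodule.span_le]
  rintro _ ⟨i, rfl⟩
  induction i using Fin.cases with
  | zero => exact ⟨1, by simp [mem_restrictTotalDegree], funext fun j => by simp [hA]⟩
  | succ i => exact ⟨X i, by simp [mem_restrictTotalDegree], funext fun j => by simp⟩

variable [Fintype σ]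

/-- The paper's `A^(k)` when the points `p j` are the columns `b_j` of `A`. -/
def monomialEvalMatrix (p : ι → σ → K) (k : ℕ) : Matrix {α : σ → ℕ // ∑ i, α i ≤ k} ι K :=
  Matrix.of fun α j => ∏ i, p j i ^ α.1 i

instance (k : ℕ) : Finite {α : σ → ℕ // ∑ i, α i ≤ k} :=
  Finite.of_injective
    (fun α i => (⟨α.1 i, Nat.lt_succ_of_le
      ((Finset.single_le_sum (by simp) (Finset.mem_univ i)).trans α.2)⟩ : Fin (k + 1)))
    fun _ _ h => Subtype.ext (funext fun i => congrArg Fin.val (congrFun h i))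

noncomputable instance (k : ℕ) : Fintype {α : σ → ℕ // ∑ i, α i ≤ k} := Fintype.ofFinite _

theorem sum_le_of_mem_support {q : MvPolynomial σ K} {k : ℕ} (hq : q.totalDegree ≤ k)
    {d : σ →₀ ℕ} (hd : d ∈ q.support) : ∑ i, d i ≤ k := by
  rw [← Finsupp.sum_fintype d (fun _ e => e) (fun _ => rfl)]
  exact (le_totalDegree hd).trans hq

theorem vecMul_monomialEvalMatrix (p : ι → σ → K) {k : ℕ} {q : MvPolynomial σ K}
    (hq : q.totalDegree ≤ k) :
    (fun α : {α : σ → ℕ // ∑ i, α i ≤ k} => coeff (Finsupp.equivFunOnFinite.symm α.1) q) ᵥ*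
      monomialEvalMatrix p k = evalAtPoints p q := by
  ext j
  simp only [vecMul, dotProduct, monomialEvalMatrix, of_apply, evalAtPoints_apply, eval_eq']
  refine Finset.sum_bij_ne_zero (fun α _ _ => Finsupp.equivFunOnFinite.symm α.1)
    (fun _ _ h => mem_support_iff.mpr (left_ne_zero_of_mul h))
    (fun _ _ _ _ _ _ h => Subtype.ext (Finsupp.equivFunOnFinite.symm.injective h))
    (fun d hd h => ⟨⟨d, sum_le_of_mem_support hq hd⟩, Finset.mem_univ _, by simpa using h, by simp⟩)
    (fun _ _ _ => by simp)

theorem rank_monomialEvalMatrix_lt [Fintype ι] (p : ι → σ → K) {k : ℕ} {q : MvPolynomial σ K}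
    (hq0 : q ≠ 0) (hq : q.totalDegree ≤ k) (hvanish : evalAtPoints p q = 0) :
    (monomialEvalMatrix p k).rank < Nat.card {α : σ → ℕ // ∑ i, α i ≤ k} := by
  rw [Nat.card_eq_fintype_card]
  refine rank_lt_card_height_of_vecMul_eq_zero (fun h => ?_)
    ((vecMul_monomialEvalMatrix p hq).trans hvanish)
  obtain ⟨d, hd⟩ := exists_coeff_ne_zero hq0
  exact hd (by simpa using congrFun h ⟨d, sum_le_of_mem_support hq (mem_support_iff.mpr hd)⟩)

theorem rank_monomialEvalMatrix_lt_of_mem_span_rows [Fintype ι] {n k : ℕ}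
    (A : Matrix (Fin (n + 1)) ι K) (hA : ∀ j, A 0 j = 1) (hk : 2 ≤ k) {e e' : ι → K}
    (he : e ≠ 0) (he' : e' ≠ 0) (hdisj : ∀ j, e j = 0 ∨ e' j = 0)
    (heA : e ∈ Submodule.span K (Set.range A)) (he'A : e' ∈ Submodule.span K (Set.range A)) :
    (monomialEvalMatrix (fun j (i : Fin n) => A i.succ j) k).rank <
      Nat.card {α : Fin n → ℕ // ∑ i, α i ≤ k} := by
  obtain ⟨q, hq, rfl⟩ := span_rows_le_map_evalAtPoints A hA heA
  obtain ⟨q', hq', rfl⟩ := span_rows_le_map_evalAtPoints A hA he'A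
  rw [SetLike.mem_coe, mem_restrictTotalDegree] at hq hq'
  refine rank_monomialEvalMatrix_lt (q := q * q') _ (mul_ne_zero ?_ ?_)
    ((totalDegree_mul q q').trans (by omega)) ?_
  · rintro rfl
    exact he (map_zero _)
  · rintro rfl
    exact he' (map_zero _)
  · ext j
    rcases hdisj j with h | h <;> simp_all

end Monomials

def subtypeSumLeEquiv (n k : ℕ) :
    {α : Fin n → ℕ // ∑ i, α i ≤ k} ≃ {β : Fin (n + 1) → ℕ // ∑ i, β i = k} where
  toFun α := ⟨Fin.cons (k - ∑ i, α.1 i) α.1, by rw [Fin.sum_cons]; have := α.2; omega⟩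
  invFun β := ⟨Fin.tail β.1, by
    have := β.2
    rw [Fin.sum_univ_succ] at this
    simp only [Fin.tail]
    omega⟩
  left_inv α := by simp
  right_inv β := by
    obtain ⟨β, hβ⟩ := β
    rw [Fin.sum_univ_succ] at hβ
    ext i
    induction i using Fin.cases with
    | zero => simp [Fin.tail]; omega
    | succ i => simp [Fin.tail]

theorem card_subtype_sum_le (n k : ℕ) :
    Nat.card {α : Fin n → ℕ // ∑ i, α i ≤ k} = (n + k).choose k := by
  rw [Nat.card_congr ((subtypeSumLeEquiv n k).trans (Sym.equivNatSumOfFintype _ k).symm),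
    Sym.natCard_sym_eq_choose, Nat.card_fin, Nat.add_right_comm, Nat.add_sub_cancel]

/-- Proposition 3.5(iii): if `c_k = dim Ker A^(k) ≥ 2` and `X_A` is `k`-selfdual (the
configuration is knap and, per Theorem 3.4, the indicator vector of each collinearity class
of the `b_i` lies in the row span of `A`), then there are two nonzero `0-1` vectors with
disjoint supports in the row span of `A`, and consequently for `k ≥ 2` the rank of `A^(k)`
is strictly less than `binom(n+k,k)` (`X_A` is not generically `k`-jet spanned). -/
theorem stmt18 (n N k : ℕ) (A : Matrix (Fin (n + 1)) (Fin (N + 1)) ℤ)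
    (h1 : ∀ j, A 0 j = 1) :
    let Ak : Matrix {α : Fin n → ℕ // ∑ i, α i ≤ k} (Fin (N + 1)) ℚ :=
      Matrix.of fun α j => ∏ i, (A i.succ j : ℚ) ^ (α.1 i)
    let rowspan : Submodule ℚ (Fin (N + 1) → ℚ) :=
      Submodule.span ℚ (Set.range fun i j => (A i j : ℚ))
    let Rel : Fin (N + 1) → Fin (N + 1) → Prop := fun i i' =>
      ∃ t : ℚ, (∀ w, Ak.mulVec w = 0 → w i = t * w i') ∨
               (∀ w, Ak.mulVec w = 0 → w i' = t * w i)
    2 ≤ Module.finrank ℚ ↥(LinearMap.ker Ak.mulVecLin) →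
    (∃ v, Ak.mulVec v = 0 ∧ ∀ j, v j ≠ 0) →
    (∀ i₀, (fun i => if Rel i i₀ then (1 : ℚ) else 0) ∈ rowspan) →
    (∃ e e' : Fin (N + 1) → ℚ,
      (∀ j, e j = 0 ∨ e j = 1) ∧ (∀ j, e' j = 0 ∨ e' j = 1) ∧
      e ≠ 0 ∧ e' ≠ 0 ∧ (∀ j, e j = 0 ∨ e' j = 0) ∧
      e ∈ rowspan ∧ e' ∈ rowspan) ∧
    (2 ≤ k → Ak.rank < (n + k).choose k) := by
  intro Ak rowspan Rel
  rintro hdim ⟨v, hv, hv0⟩ hind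
  replace hv : v ∈ LinearMap.ker Ak.mulVecLin := hv
  have hRel : Rel = CoordProportional (LinearMap.ker Ak.mulVecLin) := by
    funext i j
    exact propext (coordProportional_iff_exists_or hv hv0).symm
  have hequiv : Equivalence Rel := hRel ▸ coordProportional_equivalence hv hv0
  obtain ⟨i₁, hi₁⟩ : ∃ i₁, ¬ Rel i₁ 0 := by
    by_contra! h
    rw [hRel] at h
    have := finrank_le_one_of_forall_coordProportional h
    omega
  have hdisj := classIndicator_eq_zero_or_eq_zero (M := ℚ) hequiv hi₁
  have hne := classIndicator_ne_zero (M := ℚ) hequiv.refl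
  refine ⟨⟨_, _, classIndicator_eq_zero_or_one Rel 0, classIndicator_eq_zero_or_one Rel i₁,
    hne 0, hne i₁, hdisj, hind 0, hind i₁⟩, fun hk => ?_⟩
  rw [← card_subtype_sum_le]
  exact rank_monomialEvalMatrix_lt_of_mem_span_rows (A.map (Int.cast : ℤ → ℚ)) (by simp [h1]) hk
    (hne 0) (hne i₁) hdisj (hind 0) (hind i₁)
end
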